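/- arXiv:2405.07019 — 12 statements merged into one kernel-verified Lean document; each statement's English description precedes it below -/
import Mathlib

section
/- Let R be an infinite commutative ring with identity such that every nonzero principal ideal of R has finite index (as an additive subgroup). Then R is an integral domain. -/
/-- If `R` is an infinite commutative ring with identity in which every nonzero
principal ideal has finite index, then `R` is an integral domain. -/
theorem stmt_0 (R : Type*) [CommRing R] [Infinite R]
    (h : ∀ a : R, Ideal.span {a} ≠ ⊥ → Finite (R ⧸ Ideal.span ({a} : Set R))) :
    IsDomain R := by
  have : NoZeroDivisors R := by
    constructor
    intro a b hab
    by_contra hc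
    push_neg at hc
    obtain ⟨ha, hb⟩ := hc
    have hFa : Finite (R ⧸ Ideal.span ({a} : Set R)) :=
      h a (by simpa [Ideal.span_singleton_eq_bot] using ha)
    have hFb : Finite (R ⧸ Ideal.span ({b} : Set R)) :=
      h b (by simpa [Ideal.span_singleton_eq_bot] using hb)
    have hle : Ideal.span ({b} : Set R) ≤ LinearMap.ker (LinearMap.mulLeft R a) := by
      rw [Ideal.span_le]
      rintro x rfl
      simp [LinearMap.mem_ker, hab]
    let f : (R ⧸ Ideal.span ({b} : Set R)) →ₗ[R] R :=
      (Ideal.span ({b} : Set R)).liftQ (LinearMap.mulLeft R a) hle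
    have hrange : (Ideal.span ({a} : Set R) : Set R) = Set.range f := by
      ext x
      simp only [SetLike.mem_coe, Ideal.mem_span_singleton]
      constructor
      · rintro ⟨c, rfl⟩
        exact ⟨Submodule.Quotient.mk c, rfl⟩
      · rintro ⟨y, rfl⟩
        obtain ⟨c, rfl⟩ := Submodule.Quotient.mk_surjective _ y
        exact ⟨c, rfl⟩
    have hfin' : (Ideal.span ({a} : Set R) : Set R).Finite :=
      hrange ▸ Set.finite_range f
    have hfin : Finite (Ideal.span ({a} : Set R)) := hfin'.to_subtype
    haveI : Finite (R ⧸ (Ideal.span ({a} : Set R)).toAddSubgroup) := hFa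
    haveI : Finite ((Ideal.span ({a} : Set R)).toAddSubgroup) := hfin
    haveI : Finite R :=
      Finite.of_equiv _ (AddSubgroup.addGroupEquivQuotientProdAddSubgroup
        (s := (Ideal.span ({a} : Set R)).toAddSubgroup)).symm
    exact not_finite R
  exact NoZeroDivisors.to_isDomain R
end

section
/- Let G be a group and H a subgroup of G of infinite index. Then H is not an IP*-set in G: there exists a sequence {x_n}_{n=1}^∞ in G such that no finite product x_{t(1)} x_{t(2)} ⋯ x_{t(m)} with t(1) < t(2) < ... < t(m) lies in H. -/
/-!
Choose `x₀, x₁, …` greedily: `xₙ` is picked so that `p * xₙ ∉ H` for every product `p` of a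
subsequence of `x₀, …, xₙ₋₁` (including the empty product `1`). There are finitely many such `p`,
so this excludes only finitely many cosets `p⁻¹ H`, and infinite index leaves room for `xₙ`.
Every finite product of the sequence is `p * xₙ` with `xₙ` its last factor, hence lies outside `H`.
-/

namespace Hindman

variable {M : Type*}

def greedyPrefix (next : List M → M) : ℕ → List M
  | 0 => []
  | n + 1 => greedyPrefix next n ++ [next (greedyPrefix next n)]

def greedySeq (next : List M → M) : Stream' M := fun n => next (greedyPrefix next n)

lemma greedyPrefix_succ (next : List M → M) (n : ℕ) :
    greedyPrefix next (n + 1) = greedyPrefix next n ++ [greedySeq next n] := rfl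

/-- The invariant is stated for every tail of the sequence, since `FP` is generated from the front. -/
lemma prod_mul_notMem_of_mem_FP_greedySeq_drop [Monoid M] {S : Set M} {next : List M → M}
    (hnext : ∀ l, ∀ p ∈ l.sublists, p.prod * next l ∉ S) {a : Stream' M} {g : M}
    (hg : g ∈ FP a) : ∀ n, a = (greedySeq next).drop n →
      ∀ p ∈ (greedyPrefix next n).sublists, p.prod * g ∉ S := by
  induction hg with
  | head' a =>
    rintro n rfl p hp
    rw [Stream'.head_drop]
    exact hnext _ p hp
  | tail' a m _ ih =>
    rintro n rfl p hp
    refine ih (n + 1) Stream'.tail_drop' p ?_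
    rw [greedyPrefix_succ, List.mem_sublists] at *
    exact hp.trans (List.sublist_append_left _ _)
  | cons' a m _ ih =>
    rintro n rfl p hp
    have hp' : p ++ [greedySeq next n] ∈ (greedyPrefix next (n + 1)).sublists := by
      rw [greedyPrefix_succ, List.mem_sublists] at *
      exact hp.append (List.Sublist.refl _)
    simpa [mul_assoc, Stream'.head_drop, Stream'.get] using
      ih (n + 1) Stream'.tail_drop' _ hp'

theorem exists_forall_mem_FP_notMem [Monoid M] {S : Set M}
    (hS : ∀ F : Set M, F.Finite → ∃ y, ∀ p ∈ F, p * y ∉ S) :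
    ∃ x : Stream' M, ∀ g ∈ FP x, g ∉ S := by
  choose next hnext using fun l : List M => hS _ (l.sublists.map List.prod).finite_toSet
  refine ⟨greedySeq next, fun g hg => ?_⟩
  simpa using prod_mul_notMem_of_mem_FP_greedySeq_drop
    (fun l p hp => hnext l _ (List.mem_map_of_mem hp)) hg 0 rfl [] (by simp)

end Hindman

theorem Subgroup.exists_forall_mul_notMem_of_index_eq_zero {G : Type*} [Group G]
    {H : Subgroup G} (hH : H.index = 0) {F : Set G} (hF : F.Finite) :
    ∃ y, ∀ p ∈ F, p * y ∉ H := by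
  have : Infinite (G ⧸ H) := Subgroup.index_eq_zero_iff_infinite.mp hH
  obtain ⟨q, hq⟩ := (hF.image fun p : G => ((p⁻¹ : G) : G ⧸ H)).exists_notMem
  obtain ⟨y, rfl⟩ := QuotientGroup.mk_surjective q
  refine ⟨y, fun p hp hpy => hq ⟨p, hp, ?_⟩⟩
  rw [QuotientGroup.eq]
  simpa using hpy

/-- If `H` is a subgroup of `G` of infinite index, then `H` is not an `IP⋆`-set in `G`:
there is a sequence in `G` none of whose finite products (with increasing indices)
lies in `H`. -/
theorem stmt_2 {G : Type*} [Group G] (H : Subgroup G) (hind : H.index = 0) :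
    ∃ x : Stream' G, ∀ g ∈ Hindman.FP x, g ∉ H :=
  Hindman.exists_forall_mem_FP_notMem fun _ hF =>
    Subgroup.exists_forall_mul_notMem_of_index_eq_zero hind hF
end

section
/- Let G be a group and H a subgroup of G. Then H is an IP*-set in G if and only if H has finite index in G. -/
/-!
If `H` has finite index, Hindman's theorem puts a whole set `FP y` of finite products of some
sequence `y` inside `FP x ∩ gH` for one coset `gH`; then `y₀` and `y₀ y₁` lie in the same coset,
so `y₁ ∈ H ∩ FP x`. If `H` has infinite index, finitely many cosets `t⁻¹H` never cover `G`, so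
one can choose the terms `xₙ` one at a time with `t xₙ ∉ H` for every product `t` of a
subsequence of `x₀, …, xₙ₋₁` (the empty one included); then no finite product of `x` lies in `H`.
-/

open Hindman

namespace Hindman

variable {M : Type*} [Monoid M] [DecidableEq M] (next : Finset M → M)

/-- `greedyProds next n` holds the products of all subsequences of the first `n` terms of
`greedyStream next` (the empty product included); the next term is chosen from it. -/
def greedyProds : ℕ → Finset M
  | 0 => {1}
  | n + 1 => greedyProds n ∪ (greedyProds n).image (· * next (greedyProds n))

def greedyStream : Stream' M := fun n => next (greedyProds next n)

theorem greedyProds_subset_succ (n : ℕ) : greedyProds next n ⊆ greedyProds next (n + 1) :=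
  Finset.subset_union_left

theorem mul_greedyStream_mem_greedyProds {n : ℕ} {p : M} (hp : p ∈ greedyProds next n) :
    p * greedyStream next n ∈ greedyProds next (n + 1) :=
  Finset.mem_union_right _ (Finset.mem_image_of_mem _ hp)

variable {next} {B : Set M}

theorem mul_mem_of_mem_FP_drop (hB : ∀ n, ∀ p ∈ greedyProds next n, p * greedyStream next n ∈ B)
    {y : Stream' M} {g : M} (hg : g ∈ FP y) :
    ∀ n, y = (greedyStream next).drop n → ∀ p ∈ greedyProds next n, p * g ∈ B := by
  induction hg with
  | head' y =>
    rintro n rfl p hp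
    rw [Stream'.head_drop]
    exact hB n p hp
  | tail' y g _ ih =>
    rintro n rfl p hp
    exact ih (n + 1) Stream'.tail_drop' p (greedyProds_subset_succ next n hp)
  | cons' y g _ ih =>
    rintro n rfl p hp
    rw [Stream'.head_drop, ← mul_assoc]
    exact ih (n + 1) Stream'.tail_drop' _ (mul_greedyStream_mem_greedyProds next hp)

theorem FP_greedyStream_subset
    (hB : ∀ n, ∀ p ∈ greedyProds next n, p * greedyStream next n ∈ B) :
    FP (greedyStream next) ⊆ B := fun g hg => by
  simpa using mul_mem_of_mem_FP_drop hB hg 0 rfl 1 (Finset.mem_singleton_self 1)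

end Hindman

namespace Subgroup

variable {G : Type*} [Group G] {H : Subgroup G}

theorem exists_forall_mul_notMem_of_index_eq_zero_s3 (hH : H.index = 0) (T : Finset G) :
    ∃ y, ∀ t ∈ T, t * y ∉ H := by
  by_contra! hcover
  have : H.FiniteIndex := finiteIndex_of_leftCoset_cover_const (s := T) (g := (·⁻¹)) <| by
    refine Set.eq_univ_of_forall fun y => ?_
    obtain ⟨t, ht, hty⟩ := hcover y
    exact Set.mem_biUnion ht (mem_leftCoset_iff _ |>.mpr (by simpa using hty))
  exact FiniteIndex.index_ne_zero hH

theorem exists_FP_disjoint_of_index_eq_zero (hH : H.index = 0) :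
    ∃ x : Stream' G, ∀ g ∈ FP x, g ∉ H := by
  classical
  choose next hnext using exists_forall_mul_notMem_of_index_eq_zero_s3 hH
  exact ⟨greedyStream next, FP_greedyStream_subset (B := (H : Set G)ᶜ) fun n => hnext _⟩

theorem exists_mem_FP_mem_of_index_ne_zero (hH : H.index ≠ 0) (x : Stream' G) :
    ∃ g ∈ FP x, g ∈ H := by
  have : Finite (G ⧸ H) := index_ne_zero_iff_finite.mp hH
  let piece (q : G ⧸ H) : Set G := FP x ∩ {g | (g : G ⧸ H) = q}
  obtain ⟨-, ⟨q, rfl⟩, y, hy⟩ := FP_partition_regular x (Set.range piece) (Set.finite_range _)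
    fun g hg => Set.mem_sUnion_of_mem (t := piece g) ⟨hg, rfl⟩ (Set.mem_range_self _)
  have h₀ := hy (FP.head y)
  have h₀₁ := hy (FP.cons y _ (FP.head y.tail))
  refine ⟨y.tail.head, (hy (FP.tail y _ (FP.head y.tail))).1, ?_⟩
  simpa using QuotientGroup.eq.mp (h₀.2.trans h₀₁.2.symm)

end Subgroup

/-- A subgroup `H` of a group `G` is an `IP⋆`-set in `G` (it meets the set of finite
products of every sequence in `G`) if and only if `H` has finite index in `G`. -/
theorem stmt_3 {G : Type*} [Group G] (H : Subgroup G) :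
    (∀ x : Stream' G, ∃ g ∈ Hindman.FP x, g ∈ H) ↔ H.index ≠ 0 := by
  refine ⟨fun hIP hH => ?_, fun hH => H.exists_mem_FP_mem_of_index_ne_zero hH⟩
  obtain ⟨x, hx⟩ := H.exists_FP_disjoint_of_index_eq_zero hH
  obtain ⟨g, hg, hgH⟩ := hIP x
  exact hx g hg hgH
end

section
/- Let R be an integral domain. Then every nonzero principal ideal of R is an IP*-set in the additive group (R, +) if and only if every nonzero ideal of R has finite (additive) index in R. -/
/-!
If `R ⧸ (a)` is finite, two of the partial sums `x₀ + ⋯ + x_{k-1}` of any sequence agree modulo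
`(a)` by pigeonhole, and their difference is a block sum lying in `FS x ∩ (a)`.
Conversely, if `R ⧸ I` is infinite for some `I ≠ 0`, choose `x₀, x₁, …` greedily so that `xₙ`
avoids `-s + I` for each of the finitely many subset sums `s` of `x₀, …, x_{n-1}`. Then no finite
sum of the sequence lies in `I`, hence none lies in `(a)` for `0 ≠ a ∈ I`.
-/

open Finset

namespace Hindman

theorem exists_finset_sum_eq_of_mem_FS {M : Type*} [AddCommMonoid M] {a : Stream' M} {m : M}
    (hm : m ∈ FS a) : ∃ s : Finset ℕ, s.Nonempty ∧ ∑ i ∈ s, a.get i = m := by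
  classical
  induction hm with
  | head' a => exact ⟨{0}, singleton_nonempty 0, by simp [Stream'.head]⟩
  | tail' a m _ ih =>
    obtain ⟨s, hs, rfl⟩ := ih
    exact ⟨s.map (addRightEmbedding 1), hs.map, by simp [Stream'.get_tail]⟩
  | cons' a m _ ih =>
    obtain ⟨s, _, rfl⟩ := ih
    refine ⟨insert 0 (s.map (addRightEmbedding 1)), insert_nonempty _ _, ?_⟩
    rw [sum_insert (by simp)]
    simp [Stream'.get_tail, Stream'.head]

variable {G : Type*} [AddCommGroup G]

theorem exists_seq_finset_sum_ne_zero [Infinite G] :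
    ∃ q : ℕ → G, ∀ s : Finset ℕ, s.Nonempty → ∑ i ∈ s, q i ≠ 0 := by
  classical
  have avoid (T : Finset G) : ∃ c : G, ∀ t ∈ T, c + t ≠ 0 := by
    obtain ⟨c, hc⟩ := Infinite.exists_notMem_finset (T.image Neg.neg)
    exact ⟨c, fun t ht h => hc (mem_image.2 ⟨t, ht, (eq_neg_of_add_eq_zero_left h).symm⟩)⟩
  choose c hc using avoid
  -- `S n` collects the sums of all subfamilies of `q 0, …, q (n - 1)`, where `q n := c (S n)`.
  let S : ℕ → Finset G := fun n => Nat.rec {0} (fun _ T => T ∪ T.image (c T + ·)) n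
  have S_mono : Monotone S := monotone_nat_of_le_succ fun _ => subset_union_left
  have sum_mem (s : Finset ℕ) : ∀ n, (∀ i ∈ s, i < n) → ∑ i ∈ s, c (S i) ∈ S n := by
    induction s using Finset.induction_on_max with
    | empty => exact fun n _ => S_mono n.zero_le (mem_singleton_self 0)
    | insert a s has ih =>
      intro n hn
      rw [sum_insert fun h => (has a h).false]
      exact S_mono (hn a (mem_insert_self a s))
        (mem_union_right _ (mem_image_of_mem _ (ih a has)))
  refine ⟨fun n => c (S n), fun s hs => ?_⟩
  rw [← insert_erase (max'_mem s hs), sum_insert (notMem_erase _ _)]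
  exact hc _ _ (sum_mem _ _ fun i hi => lt_max'_of_mem_erase_max' s hs hi)

theorem exists_forall_FS_notMem_of_infinite_quotient (H : AddSubgroup G) [Infinite (G ⧸ H)] :
    ∃ x : Stream' G, ∀ m ∈ FS x, m ∉ H := by
  obtain ⟨q, hq⟩ := exists_seq_finset_sum_ne_zero (G := G ⧸ H)
  refine ⟨fun n => (q n).out, fun m hm hmH => ?_⟩
  obtain ⟨s, hs, rfl⟩ := exists_finset_sum_eq_of_mem_FS hm
  apply hq s hs
  rw [← QuotientAddGroup.eq_zero_iff] at hmH
  simpa [Stream'.get, QuotientAddGroup.out_eq'] using hmH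

theorem exists_mem_FS_of_finite_quotient (H : AddSubgroup G) [Finite (G ⧸ H)] (x : Stream' G) :
    ∃ m ∈ FS x, m ∈ H := by
  obtain ⟨m, n, hmn, heq⟩ := Finite.exists_ne_map_eq_of_infinite
    fun k : ℕ => (↑(∑ i ∈ range k, x.get i) : G ⧸ H)
  wlog hlt : m < n generalizing m n
  · exact this n m hmn.symm heq.symm (by omega)
  refine ⟨∑ i ∈ Ico m n, x.get i, FS.finsetSum x _ (nonempty_Ico.2 hlt), ?_⟩
  rw [sum_Ico_eq_sub _ hlt.le, ← QuotientAddGroup.eq_iff_sub_mem]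
  exact heq.symm

end Hindman

theorem stmt_4_general (R : Type*) [CommRing R] :
    (∀ a : R, a ≠ 0 → ∀ x : Stream' R, ∃ s ∈ Hindman.FS x,
        s ∈ (Ideal.span ({a} : Set R) : Set R)) ↔
    (∀ I : Ideal R, I ≠ ⊥ → Finite (R ⧸ I)) := by
  constructor
  · intro hIP I hI
    by_contra hfin
    have : Infinite (R ⧸ I.toAddSubgroup) := not_finite_iff_infinite.1 hfin
    obtain ⟨a, haI, ha⟩ := Submodule.exists_mem_ne_zero_of_ne_bot hI
    obtain ⟨x, hx⟩ := Hindman.exists_forall_FS_notMem_of_infinite_quotient I.toAddSubgroup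
    obtain ⟨m, hm, hma⟩ := hIP a ha x
    exact hx m hm ((Ideal.span_singleton_le_iff_mem I).2 haI hma)
  · intro hfin a ha x
    have : Finite (R ⧸ (Ideal.span {a}).toAddSubgroup) :=
      hfin _ (Ideal.span_singleton_eq_bot.not.2 ha)
    exact Hindman.exists_mem_FS_of_finite_quotient (Ideal.span {a}).toAddSubgroup x

/-- In an integral domain `R`, every nonzero principal ideal is an `IP⋆`-set in `(R,+)`
if and only if every nonzero ideal of `R` has finite (additive) index. -/
theorem stmt_4 (R : Type*) [CommRing R] [IsDomain R] :
    (∀ a : R, a ≠ 0 → ∀ x : Stream' R, ∃ s ∈ Hindman.FS x,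
        s ∈ (Ideal.span ({a} : Set R) : Set R)) ↔
    (∀ I : Ideal R, I ≠ ⊥ → Finite (R ⧸ I)) :=
  stmt_4_general R
end

section
/- Let (S, +) be a commutative semigroup and A ⊆ S a J-set. Then for every sequence {x_n}_{n=1}^∞ in S there exist a nonempty finite H ⊆ ℕ and elements u, v ∈ A such that u + Σ_{n∈H} x_n = v (i.e., Σ_{n∈H} x_n ∈ A − A in the sense of the difference relation, so that A − A is an IP*-set in S). -/
/-- The sum of the values of `f` over a finite index set `H` in a commutative
semigroup (which has no zero, hence the `Option`): `none` iff `H = ∅`. -/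
def finsetSum {S : Type*} [AddCommSemigroup S] (f : ℕ → S) (H : Finset ℕ) : Option S :=
  match (H.sort (· ≤ ·)).map f with
  | [] => none
  | a :: l => some (l.foldl (· + ·) a)

/-- `A` is a J-set in the commutative semigroup `(S,+)`: for every finite family of
sequences there are `a ∈ S` and a nonempty finite `H ⊆ ℕ` with
`a + ∑_{n ∈ H} f n ∈ A` for each `f` in the family. -/
def IsJSet {S : Type*} [AddCommSemigroup S] (A : Set S) : Prop :=
  ∀ F : Finset (ℕ → S), ∃ a : S, ∃ H : Finset ℕ, H.Nonempty ∧
    ∀ f ∈ F, ∃ s, finsetSum f H = some s ∧ a + s ∈ A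

private lemma foldl_add_add {S : Type*} [AddCommSemigroup S] (f g : ℕ → S) :
    ∀ (l : List ℕ) (a b : S),
      (l.map fun n => f n + g n).foldl (· + ·) (a + b) =
        (l.map f).foldl (· + ·) a + (l.map g).foldl (· + ·) b := by
  intro l
  induction l with
  | nil => intro a b; simp
  | cons n l ih =>
    intro a b
    simp only [List.map_cons, List.foldl_cons]
    rw [add_add_add_comm a b (f n) (g n)] at *
    exact ih (a + f n) (b + g n)

private lemma finsetSum_exists {S : Type*} [AddCommSemigroup S] (g : ℕ → S)
    {H : Finset ℕ} (hH : H.Nonempty) : ∃ t, finsetSum g H = some t := by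
  obtain ⟨n, hn⟩ := hH
  have hmem : n ∈ H.sort (· ≤ ·) := (Finset.mem_sort _).2 hn
  unfold finsetSum
  cases hL : H.sort (· ≤ ·) with
  | nil => rw [hL] at hmem; simp at hmem
  | cons m l => exact ⟨_, rfl⟩

private lemma finsetSum_add {S : Type*} [AddCommSemigroup S] (f g : ℕ → S)
    {H : Finset ℕ} {s t : S} (hf : finsetSum f H = some s)
    (hg : finsetSum g H = some t) :
    finsetSum (fun n => f n + g n) H = some (s + t) := by
  unfold finsetSum at *
  cases hL : H.sort (· ≤ ·) with
  | nil => rw [hL] at hf; simp at hf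
  | cons m l =>
    rw [hL] at hf hg
    simp only [List.map_cons, Option.some.injEq] at hf hg ⊢
    rw [← hf, ← hg]
    exact foldl_add_add f g l (f m) (g m)

private lemma sort_map (e : ℕ ↪ ℕ) (he : Monotone e) (H : Finset ℕ) :
    (H.map e).sort (· ≤ ·) = (H.sort (· ≤ ·)).map e := by
  refine (fun hp hs₁ hs₂ => List.Perm.eq_of_pairwise' hs₁ hs₂ hp) ?_ (Finset.pairwise_sort _ _) ?_
  · have h1 : ((H.map e).sort (· ≤ ·) : Multiset ℕ) = (H.map e).1 :=
      Finset.sort_eq _ _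
    have h2 : ((H.sort (· ≤ ·)).map e : Multiset ℕ) = Multiset.map e H.1 := by
      rw [← Multiset.map_coe, Finset.sort_eq]
    rw [Finset.map_val] at h1
    exact Multiset.coe_eq_coe.1 (h1.trans h2.symm)
  · exact List.Pairwise.map e (fun a b hab => he hab) (Finset.pairwise_sort H _)

private lemma finsetSum_map {S : Type*} [AddCommSemigroup S] (x : ℕ → S)
    (e : ℕ ↪ ℕ) (he : Monotone e) (H : Finset ℕ) :
    finsetSum x (H.map e) = finsetSum (fun n => x (e n)) H := by
  unfold finsetSum
  rw [sort_map e he H, List.map_map]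
  rfl

/-- If `A` is a J-set in a commutative semigroup `(S,+)`, then `A - A` is an
`IP⋆`-set: for every sequence `x` there is a nonempty finite `H` whose sum `s`
satisfies `u + s = v` for some `u, v ∈ A`. -/
theorem stmt_5 {S : Type*} [AddCommSemigroup S] (A : Set S) (hA : IsJSet A) :
    ∀ x : ℕ → S, ∃ H : Finset ℕ, H.Nonempty ∧ ∃ s, finsetSum x H = some s ∧
      ∃ u ∈ A, ∃ v ∈ A, u + s = v := by
  classical
  intro x
  set f₁ : ℕ → S := fun n => x (2 * n) with hf₁
  set g : ℕ → S := fun n => x (2 * n + 1) with hg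
  set f₂ : ℕ → S := fun n => f₁ n + g n with hf₂
  obtain ⟨a, H, hH, hF⟩ := hA {f₁, f₂}
  obtain ⟨s₁, hs₁, hus₁⟩ := hF f₁ (Finset.mem_insert_self _ _)
  obtain ⟨s₂, hs₂, hus₂⟩ := hF f₂
    (Finset.mem_insert_of_mem (Finset.mem_singleton_self _))
  obtain ⟨t, ht⟩ := finsetSum_exists g hH
  have hadd : finsetSum f₂ H = some (s₁ + t) := finsetSum_add f₁ g hs₁ ht
  have hst : s₂ = s₁ + t := by
    rw [hs₂] at hadd; simpa using hadd
  set e : ℕ ↪ ℕ := ⟨fun n => 2 * n + 1, fun a b h => by dsimp at h; omega⟩ with he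
  refine ⟨H.map e, hH.map, t, ?_, a + s₁, hus₁, a + s₂, hus₂, ?_⟩
  · rw [finsetSum_map x e (fun a b hab => by simp only [he, Function.Embedding.coeFn_mk]; change 2 * a + 1 ≤ 2 * b + 1; omega) H]
    exact ht
  · rw [hst, ← add_assoc]
end

section
/- Let R be a large integral domain and A an IP*-set in (R, +). Then for every nonzero r ∈ R, the dilate rA = {ra : a ∈ A} is again an IP*-set in (R, +). -/
/-- `R` is a large integral domain: every nonzero ideal has finite (additive) index. -/
def IsLargeID (R : Type*) [CommRing R] [IsDomain R] : Prop :=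
  ∀ I : Ideal R, I ≠ ⊥ → Finite (R ⧸ I)

/-- `A` is an `IP⋆`-set in `(R,+)`: it meets the set of finite sums of every sequence. -/
def IPStar {R : Type*} [AddCommSemigroup R] (A : Set R) : Prop :=
  ∀ x : Stream' R, ∃ s ∈ Hindman.FS x, s ∈ A

/-!
Since `rR` has finite index, Hindman's theorem applied to the finite colouring of `FS x` by
residues mod `rR` yields a sequence `b` with `FS b ⊆ FS x` whose finite sums all lie in one
residue class `q`. As `q + q = q`, that class is `rR` itself, so `b n = r * w n` for some sequence `w`.
An element `s ∈ FS w ∩ A` then gives `r s ∈ FS b ∩ rA ⊆ FS x ∩ rA`.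
-/

theorem Stream'.exists_map_eq_of_forall_mem_range {α β : Type*} (f : α → β) (b : Stream' β)
    (h : ∀ n, b.get n ∈ Set.range f) : ∃ w : Stream' α, w.map f = b := by
  choose w hw using h
  exact ⟨w, Stream'.ext hw⟩

namespace Hindman

theorem FS.map {M N F : Type*} [AddSemigroup M] [AddSemigroup N] [FunLike F M N]
    [AddHomClass F M N] (f : F) {a : Stream' M} {m : M} (h : m ∈ FS a) :
    f m ∈ FS (a.map f) := by
  induction h with
  | head' a => exact FS.head _
  | tail' a m _ ih => exact FS.tail _ _ ih
  | cons' a m _ ih =>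
    rw [map_add]
    exact FS.cons _ _ ih

theorem exists_FS_subset_forall_map_eq_zero {M N F : Type*} [AddSemigroup M]
    [AddLeftCancelMonoid N] [Finite N] [FunLike F M N] [AddHomClass F M N] (f : F)
    (a : Stream' M) : ∃ b : Stream' M, FS b ⊆ FS a ∧ ∀ m ∈ FS b, f m = 0 := by
  obtain ⟨_, ⟨q, rfl⟩, b, hb⟩ := FS_partition_regular a
    (Set.range fun q : N => FS a ∩ f ⁻¹' {q}) (Set.finite_range _)
    (fun m hm => ⟨_, ⟨f m, rfl⟩, hm, rfl⟩)
  have hbq : ∀ m ∈ FS b, f m = q := fun m hm => (hb hm).2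
  have hq : q = 0 := by
    have h := hbq _ (FS.add_two b 0 1 zero_lt_one)
    rwa [map_add, hbq _ (FS.singleton b 0), hbq _ (FS.singleton b 1), add_eq_left] at h
  exact ⟨b, fun m hm => (hb hm).1, fun m hm => hq ▸ hbq m hm⟩

end Hindman

/-- In a large integral domain, any nonzero dilate `rA` of an `IP⋆`-set `A` in `(R,+)`
is again an `IP⋆`-set. -/
theorem stmt_8 {R : Type*} [CommRing R] [IsDomain R] (hR : IsLargeID R)
    (A : Set R) (hA : IPStar A) (r : R) (hr : r ≠ 0) :
    IPStar ((fun a => r * a) '' A) := by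
  intro x
  have : Finite (R ⧸ Ideal.span {r}) := hR _ (by simpa [Ideal.span_singleton_eq_bot] using hr)
  obtain ⟨b, hbx, hb⟩ :=
    Hindman.exists_FS_subset_forall_map_eq_zero (Ideal.Quotient.mk (Ideal.span {r})) x
  obtain ⟨w, rfl⟩ := b.exists_map_eq_of_forall_mem_range (r * ·) fun n => by
    obtain ⟨c, hc⟩ := Ideal.mem_span_singleton.mp <|
      Ideal.Quotient.eq_zero_iff_mem.mp (hb _ (Hindman.FS.singleton b n))
    exact ⟨c, hc.symm⟩
  obtain ⟨s, hs, hsA⟩ := hA w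
  exact ⟨r * s, hbx (Hindman.FS.map (AddMonoidHom.mulLeft r) hs), s, hsA, rfl⟩
end

section
/- Let r ∈ ℕ, A ⊆ ℕ an IP*-set in (ℕ, +), and B ⊆ ℕ an IP_r*-set in (ℕ, +). Then there exists k ∈ A such that k·ℕ ⊆ A·B = {ab : a ∈ A, b ∈ B}. -/
/-- `A` is an `IP⋆`-set in `(ℕ,+)` (`ℕ` meaning the positive integers): `A` meets
the set of finite sums of every sequence of positive integers. -/
def IPStarNat (A : Set ℕ) : Prop :=
  ∀ x : ℕ → ℕ, (∀ n, 0 < x n) →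
    ∃ H : Finset ℕ, H.Nonempty ∧ (∑ n ∈ H, x n) ∈ A

/-- `B` is an `IP_r⋆`-set in `(ℕ,+)`: it meets
`FS({x_n}_{n=1}^r) = {∑_{n ∈ H} x_n : ∅ ≠ H ⊆ {1, …, r}}` for every finite
sequence of positive integers. -/
def IPrStarNat (r : ℕ) (B : Set ℕ) : Prop :=
  ∀ x : ℕ → ℕ, (∀ n, 0 < x n) →
    ∃ H : Finset ℕ, H ⊆ Finset.Icc 1 r ∧ H.Nonempty ∧ (∑ n ∈ H, x n) ∈ B

/-! IP⋆-sets in `(ℕ, +)` are closed under finite intersections (by Hindman's theorem every FS-set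
contains an FS-set lying in the IP⋆-set or in its complement, and the latter is impossible) and
under preimages of dilations `t ↦ q t`.
Hence some `t` satisfies `(r!/j) t ∈ A` for all `1 ≤ j ≤ r`; put `k = r! t`. For `n > 0`, the
IP_r⋆ property of `B` applied to the constant sequence `n` gives `j n ∈ B` for some
`1 ≤ j ≤ r`, and `k n = ((r!/j) t) (j n)`. -/

open Hindman Nat

lemma Hindman.FS.exists_finset_sum {M : Type*} [AddCommMonoid M] {a : Stream' M} {m : M}
    (hm : m ∈ FS a) : ∃ H : Finset ℕ, H.Nonempty ∧ ∑ i ∈ H, a.get i = m := by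
  induction hm with
  | head' a => exact ⟨{0}, by simp, by simp [Stream'.head]⟩
  | tail' a m _ ih =>
    obtain ⟨H, hH, rfl⟩ := ih
    exact ⟨H.map (addRightEmbedding 1), hH.map, by simp [Stream'.get_tail]⟩
  | cons' a m _ ih =>
    obtain ⟨H, -, rfl⟩ := ih
    refine ⟨insert 0 (H.map (addRightEmbedding 1)), Finset.insert_nonempty _ _, ?_⟩
    rw [Finset.sum_insert (by simp)]
    simp [Stream'.get_tail, Stream'.head]

lemma Hindman.pos_of_mem_FS {a : Stream' ℕ} (ha : ∀ n, 0 < a.get n) {m : ℕ}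
    (hm : m ∈ FS a) : 0 < m := by
  induction hm with
  | head' a => exact ha 0
  | tail' a m _ ih => exact ih fun n => ha (n + 1)
  | cons' a m _ ih => exact Nat.add_pos_left (ha 0) _

lemma ipStarNat_iff {A : Set ℕ} :
    IPStarNat A ↔ ∀ a : Stream' ℕ, (∀ n, 0 < a.get n) → (A ∩ FS a).Nonempty := by
  constructor
  · intro hA a ha
    obtain ⟨H, hH, hHA⟩ := hA a ha
    exact ⟨_, hHA, FS.finsetSum a H hH⟩
  · intro hA x hx
    obtain ⟨m, hmA, hm⟩ := hA x hx
    obtain ⟨H, hH, rfl⟩ := FS.exists_finset_sum hm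
    exact ⟨H, hH, hmA⟩

namespace IPStarNat

variable {A B : Set ℕ}

lemma univ : IPStarNat Set.univ :=
  fun _ _ => ⟨{0}, Finset.singleton_nonempty 0, Set.mem_univ _⟩

lemma nonempty (hA : IPStarNat A) : A.Nonempty :=
  let ⟨_, _, hHA⟩ := hA (fun _ => 1) fun _ => one_pos
  ⟨_, hHA⟩

lemma exists_FS_subset (hA : IPStarNat A) (a : Stream' ℕ) (ha : ∀ n, 0 < a.get n) :
    ∃ b : Stream' ℕ, (∀ n, 0 < b.get n) ∧ FS b ⊆ A ∩ FS a := by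
  have hcov : FS a ⊆ ⋃₀ {A ∩ FS a, Aᶜ ∩ FS a} := fun m hm => by
    by_cases h : m ∈ A
    · exact ⟨_, Set.mem_insert _ _, h, hm⟩
    · exact ⟨_, Set.mem_insert_of_mem _ rfl, h, hm⟩
  obtain ⟨c, hc, b, hb⟩ := FS_partition_regular a _ ((Set.finite_singleton _).insert _) hcov
  have hb_sub : FS b ⊆ FS a := by
    rcases hc with rfl | rfl <;> exact hb.trans Set.inter_subset_right
  have hb_pos : ∀ n, 0 < b.get n := fun n => pos_of_mem_FS ha (hb_sub (FS.singleton b n))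
  rcases hc with rfl | rfl
  · exact ⟨b, hb_pos, hb⟩
  · obtain ⟨m, hmA, hm⟩ := ipStarNat_iff.mp hA b hb_pos
    exact absurd hmA (hb hm).1

lemma inter (hA : IPStarNat A) (hB : IPStarNat B) : IPStarNat (A ∩ B) := by
  refine ipStarNat_iff.mpr fun a ha => ?_
  obtain ⟨b, hb_pos, hb⟩ := hA.exists_FS_subset a ha
  obtain ⟨m, hmB, hm⟩ := ipStarNat_iff.mp hB b hb_pos
  exact ⟨m, ⟨(hb hm).1, hmB⟩, (hb hm).2⟩

lemma biInter {ι : Type*} {s : Finset ι} {C : ι → Set ℕ}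
    (hC : ∀ j ∈ s, IPStarNat (C j)) : IPStarNat (⋂ j ∈ s, C j) := by
  classical
  induction s using Finset.induction with
  | empty => simpa using univ
  | insert j s _ ih =>
    rw [Finset.set_biInter_insert]
    exact (hC j (s.mem_insert_self j)).inter (ih fun i hi => hC i (Finset.mem_insert_of_mem hi))

lemma preimage_mul (hA : IPStarNat A) {q : ℕ} (hq : 0 < q) : IPStarNat ((q * ·) ⁻¹' A) :=
  fun x hx =>
    let ⟨H, hH, hHA⟩ := hA (fun n => q * x n) fun n => Nat.mul_pos hq (hx n)
    ⟨H, hH, by simpa [Finset.mul_sum] using hHA⟩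

end IPStarNat

namespace IPrStarNat

variable {r : ℕ} {B : Set ℕ}

lemma pos (hB : IPrStarNat r B) : 0 < r := by
  obtain ⟨H, hH, hne, -⟩ := hB (fun _ => 1) fun _ => one_pos
  by_contra! hr
  obtain ⟨i, hi⟩ := hne
  simpa [Nat.le_zero.mp hr] using hH hi

lemma exists_mul_mem (hB : IPrStarNat r B) {n : ℕ} (hn : 0 < n) :
    ∃ j ∈ Finset.Icc 1 r, j * n ∈ B := by
  obtain ⟨H, hH, hne, hHB⟩ := hB (fun _ => n) fun _ => hn
  refine ⟨H.card, Finset.mem_Icc.mpr ⟨hne.card_pos, ?_⟩, by simpa using hHB⟩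
  simpa using Finset.card_le_card hH

end IPrStarNat

theorem stmt_10_general (r : ℕ) (A B : Set ℕ)
    (hA : IPStarNat A) (hB : IPrStarNat r B) :
    ∃ k ∈ A, ∀ n : ℕ, 0 < n → ∃ a ∈ A, ∃ b ∈ B, k * n = a * b := by
  have hdvd : ∀ j ∈ Finset.Icc 1 r, j ∣ r ! := fun j hj =>
    dvd_factorial (Finset.mem_Icc.mp hj).1 (Finset.mem_Icc.mp hj).2
  have hC : IPStarNat (⋂ j ∈ Finset.Icc 1 r, (r ! / j * ·) ⁻¹' A) :=
    IPStarNat.biInter fun j hj =>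
      hA.preimage_mul <|
        Nat.div_pos (le_of_dvd r.factorial_pos (hdvd j hj)) (Finset.mem_Icc.mp hj).1
  obtain ⟨t, ht⟩ := hC.nonempty
  simp only [Set.mem_iInter, Set.mem_preimage] at ht
  refine ⟨r ! * t, by simpa using ht 1 (Finset.mem_Icc.mpr ⟨le_rfl, hB.pos⟩), fun n hn => ?_⟩
  obtain ⟨j, hj, hjB⟩ := hB.exists_mul_mem hn
  refine ⟨r ! / j * t, ht j hj, j * n, hjB, ?_⟩
  calc r ! * t * n = r ! / j * j * t * n := by rw [Nat.div_mul_cancel (hdvd j hj)]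
    _ = r ! / j * t * (j * n) := by ring

/-- Goswami's theorem: if `A` is an `IP⋆`-set and `B` an `IP_r⋆`-set in `(ℕ,+)`,
then there is `k ∈ A` with `k·ℕ ⊆ A·B`. -/
theorem stmt_10 (r : ℕ) (hr : 0 < r) (A B : Set ℕ)
    (hA : IPStarNat A) (hB : IPrStarNat r B) :
    ∃ k ∈ A, ∀ n : ℕ, 0 < n → ∃ a ∈ A, ∃ b ∈ B, k * n = a * b :=
  stmt_10_general r A B hA hB
end

section
/- Let A ⊆ ℕ be a CR-set. Then there exists r ∈ ℕ such that A − A = {m − n : m, n ∈ A, m > n} is an IP_r*-set in (ℕ, +). -/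
/-- `A` is a CR-set in `(ℕ,+)`: for each `k` there is `r` such that for every
`r × k` matrix `M` with entries in `ℕ` there exist `a` and a nonempty
`H ⊆ {1, …, r}` with `a + ∑_{t ∈ H} M t j ∈ A` for each column `j`. -/
def IsCRSet (A : Set ℕ) : Prop :=
  ∀ k : ℕ, 0 < k → ∃ r : ℕ, 0 < r ∧ ∀ M : Fin r → Fin k → ℕ,
    ∃ a : ℕ, ∃ H : Finset (Fin r), H.Nonempty ∧
      ∀ j : Fin k, a + ∑ t ∈ H, M t j ∈ A

/-- `A - A = {m - n : m, n ∈ A, m > n}`. -/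
def diffSet (A : Set ℕ) : Set ℕ := {d | ∃ m ∈ A, ∃ n ∈ A, n < m ∧ m - n = d}

/-- If `A ⊆ ℕ` is a CR-set, then `A - A` is an `IP_r⋆`-set for some `r`. -/
theorem stmt_11 (A : Set ℕ) (hA : IsCRSet A) :
    ∃ r : ℕ, 0 < r ∧ IPrStarNat r (diffSet A) := by
  obtain ⟨r, hr, hM⟩ := hA 2 (by norm_num)
  refine ⟨r, hr, ?_⟩
  intro x hx
  obtain ⟨a, H, hHne, hj⟩ := hM (fun t j => if j = 0 then 0 else x (t.1 + 1))
  have hinj : Set.InjOn (fun t : Fin r => t.1 + 1) H := fun s _ t _ h => by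
    simp only at h; exact Fin.ext (by omega)
  refine ⟨H.image (fun t => t.1 + 1), ?_, hHne.image _, ?_⟩
  · intro n hn
    simp only [Finset.mem_image] at hn
    obtain ⟨t, _, rfl⟩ := hn
    simp [Finset.mem_Icc]
  · rw [Finset.sum_image (fun s hs t ht h => hinj hs ht h)]
    have h0 := hj 0
    have h1 := hj 1
    simp only [if_pos, Finset.sum_const_zero, add_zero] at h0
    have h1' : a + ∑ t ∈ H, x (t.1 + 1) ∈ A := hj 1
    have hpos : 0 < ∑ t ∈ H, x (t.1 + 1) :=
      Finset.sum_pos (fun t _ => hx _) hHne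
    exact ⟨a + ∑ t ∈ H, x (t.1 + 1), h1', a, h0, by omega, by omega⟩
end

section
/- Let A ⊆ ℕ be a CR-set. Then there exists k ∈ ℕ such that k·ℕ ⊆ (A − A)·(A − A), where A − A = {m − n : m, n ∈ A, m > n}. -/
/-- If `A ⊆ ℕ` is a CR-set, then `k·ℕ ⊆ (A - A)·(A - A)` for some `k ∈ ℕ`. -/
theorem stmt_12 (A : Set ℕ) (hA : IsCRSet A) :
    ∃ k : ℕ, 0 < k ∧ ∀ n : ℕ, 0 < n →
      ∃ x ∈ diffSet A, ∃ y ∈ diffSet A, k * n = x * y := by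
  classical
  -- First application of CR with k = 2, giving the bound R.
  obtain ⟨R, hRpos, hM2⟩ := hA 2 (by norm_num)
  have hLpos : 0 < R.factorial := R.factorial_pos
  -- Second application of CR with k = R + 1, on the columns (0, R!/1, …, R!/R).
  obtain ⟨R', hR'pos, hMR⟩ := hA (R + 1) (Nat.succ_pos R)
  obtain ⟨a', H', hH'ne, hmem'⟩ :=
    hMR fun _ j => if (j : ℕ) = 0 then 0 else R.factorial / (j : ℕ)
  have hs₀pos : 0 < H'.card := Finset.card_pos.mpr hH'ne
  have ha' : a' ∈ A := by
    have h0 := hmem' ⟨0, Nat.succ_pos R⟩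
    simpa using h0
  -- The "menu": for every 1 ≤ s ≤ R, the number H'.card * (R!/s) is in A - A.
  have hy : ∀ s : ℕ, 0 < s → s ≤ R →
      H'.card * (R.factorial / s) ∈ diffSet A := by
    intro s hs hsR
    have hdvd : s ∣ R.factorial := Nat.dvd_factorial hs hsR
    have hdiv : 0 < R.factorial / s := Nat.div_pos (Nat.le_of_dvd hLpos hdvd) hs
    have hmem := hmem' ⟨s, by omega⟩
    simp only [Fin.val_mk, if_neg hs.ne', Finset.sum_const, smul_eq_mul] at hmem
    have hpos : 0 < H'.card * (R.factorial / s) := Nat.mul_pos hs₀pos hdiv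
    exact ⟨a' + H'.card * (R.factorial / s), hmem, a', ha', by omega, by omega⟩
  -- The multiplier k := H'.card * R!.
  refine ⟨H'.card * R.factorial, Nat.mul_pos hs₀pos hLpos, fun n hn => ?_⟩
  -- Apply the k = 2 instance to the columns (0, n).
  obtain ⟨a, H, hHne, hmem⟩ := hM2 fun _ j => if (j : ℕ) = 0 then 0 else n
  have hspos : 0 < H.card := Finset.card_pos.mpr hHne
  have hsR : H.card ≤ R := by simpa using Finset.card_le_univ H
  have ha : a ∈ A := by
    have h0 := hmem ⟨0, by norm_num⟩
    simpa using h0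
  have hx : a + H.card * n ∈ A := by
    have h1 := hmem ⟨1, by norm_num⟩
    simpa [Finset.sum_const, smul_eq_mul] using h1
  have hxpos : 0 < H.card * n := Nat.mul_pos hspos hn
  have hxD : H.card * n ∈ diffSet A :=
    ⟨a + H.card * n, hx, a, ha, by omega, by omega⟩
  have hyD := hy H.card hspos hsR
  refine ⟨H.card * n, hxD, H'.card * (R.factorial / H.card), hyD, ?_⟩
  have hc : H.card * (R.factorial / H.card) = R.factorial :=
    Nat.mul_div_cancel' (Nat.dvd_factorial hspos hsR)
  calc H'.card * R.factorial * n
      = H'.card * (H.card * (R.factorial / H.card)) * n := by rw [hc]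
    _ = H.card * n * (H'.card * (R.factorial / H.card)) := by ring
end

section
/- Let R be a large integral domain and A ⊆ R an additive central*-set (i.e., A meets every additive central set in (R,+)). Then for every nonzero r ∈ R, the set r^{-1}A = {x ∈ R : rx ∈ A} is also an additive central*-set in (R, +). -/
/-- Product of ultrafilters on a semigroup `S` (the restriction to `βS` of the
Stone–Čech extension of the multiplication):
`A ∈ umul p q ↔ {x | {y | x * y ∈ A} ∈ q} ∈ p`. -/
def umul {S : Type*} [Semigroup S] (p q : Ultrafilter S) : Ultrafilter S :=
  p.bind fun x => q.map (x * ·)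

/-- `p` is a minimal idempotent of `(βS, ·)`: `p` is idempotent and minimal for the
order `q ≤ p ↔ q·p = p·q = q` on idempotents. -/
def IsMinimalIdempotent {S : Type*} [Semigroup S] (p : Ultrafilter S) : Prop :=
  umul p p = p ∧ ∀ q : Ultrafilter S, umul q q = q →
    umul q p = q → umul p q = q → q = p

/-- `A` is central in the semigroup `(S, ·)`: `A` belongs to some minimal idempotent
ultrafilter. -/
def Central {S : Type*} [Semigroup S] (A : Set S) : Prop :=
  ∃ p : Ultrafilter S, IsMinimalIdempotent p ∧ A ∈ p

/-- Sum of ultrafilters on an additive semigroup `S`: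
`A ∈ uadd p q ↔ {x | {y | x + y ∈ A} ∈ q} ∈ p`. -/
def uadd {S : Type*} [AddSemigroup S] (p q : Ultrafilter S) : Ultrafilter S :=
  p.bind fun x => q.map (x + ·)

/-- `p` is a minimal idempotent of `(βS, +)`. -/
def IsMinimalIdempotentAdd {S : Type*} [AddSemigroup S] (p : Ultrafilter S) : Prop :=
  uadd p p = p ∧ ∀ q : Ultrafilter S, uadd q q = q →
    uadd q p = q → uadd p q = q → q = p

/-- `A` is central in the additive semigroup `(S, +)`. -/
def AddCentral {S : Type*} [AddSemigroup S] (A : Set S) : Prop :=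
  ∃ p : Ultrafilter S, IsMinimalIdempotentAdd p ∧ A ∈ p

/-- The multiplicative semigroup `(R \ {0}, ·)` of an integral domain. -/
instance nzSemigroup {R : Type*} [CommRing R] [IsDomain R] :
    Semigroup {x : R // x ≠ 0} where
  mul a b := ⟨a.1 * b.1, mul_ne_zero a.2 b.2⟩
  mul_assoc a b c := Subtype.ext (mul_assoc a.1 b.1 c.1)

/-- `A ⊆ R` is multiplicatively central in `(R \ {0}, ·)`. -/
def MulCentralNZ {R : Type*} [CommRing R] [IsDomain R] (A : Set R) : Prop :=
  Central {x : {x : R // x ≠ 0} | (x : R) ∈ A}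

/-- `A` is an additive central⋆-set: `A` meets every additive central set. -/
def AddCentralStar {S : Type*} [AddSemigroup S] (A : Set S) : Prop :=
  ∀ C : Set S, AddCentral C → (A ∩ C).Nonempty

section helper
variable {S : Type*} {T : Type*} [AddSemigroup S] [AddSemigroup T]

lemma mem_uadd_iff {p q : Ultrafilter S} {A : Set S} :
    A ∈ uadd p q ↔ {x | {y | x + y ∈ A} ∈ q} ∈ p := by
  have h0 : A ∈ uadd p q ↔
      A ∈ Filter.bind (↑p : Filter S) (fun x => ↑(q.map (x + ·))) := Iff.rfl
  rw [h0, Filter.mem_bind']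
  simp only [Ultrafilter.mem_coe, Ultrafilter.mem_map]
  rfl

lemma umap_congr {f g : S → T} {s : Ultrafilter S} (h : {x | f x = g x} ∈ s) :
    s.map f = s.map g := by
  ext A
  simp only [Ultrafilter.mem_map]
  constructor
  · intro hA
    refine Filter.mem_of_superset (Filter.inter_mem hA h) ?_
    rintro x ⟨h1, h2⟩
    show g x ∈ A
    rw [← h2]; exact h1
  · intro hA
    refine Filter.mem_of_superset (Filter.inter_mem hA h) ?_
    rintro x ⟨h1, h2⟩
    show f x ∈ A
    rw [h2]; exact h1

lemma umap_inj {f : S → T} (hf : Function.Injective f) :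
    Function.Injective (Ultrafilter.map f) := by
  intro p q h
  rw [← Ultrafilter.coe_le_coe]
  intro B hB
  have h1 : f '' B ∈ Ultrafilter.map f q :=
    Ultrafilter.mem_map.2
      (Filter.mem_of_superset hB (Set.subset_preimage_image f B))
  rw [← h] at h1
  have := Ultrafilter.mem_map.1 h1
  rwa [Set.preimage_image_eq B hf] at this

lemma map_uadd (f : S → T) (hf : ∀ x y, f (x + y) = f x + f y) (p q : Ultrafilter S) :
    Ultrafilter.map f (uadd p q) = uadd (Ultrafilter.map f p) (Ultrafilter.map f q) := by
  ext A
  rw [Ultrafilter.mem_map, mem_uadd_iff, mem_uadd_iff]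
  simp only [Ultrafilter.mem_map, Set.preimage_setOf_eq, Set.mem_preimage]
  constructor
  · intro h
    refine Filter.mem_of_superset h ?_
    intro x hx
    refine Filter.mem_of_superset hx ?_
    intro y hy
    simpa [← hf] using hy
  · intro h
    refine Filter.mem_of_superset h ?_
    intro x hx
    refine Filter.mem_of_superset hx ?_
    intro y hy
    simpa [hf] using hy

lemma uadd_pure (a b : S) : uadd (pure a) (pure b) = (pure (a + b) : Ultrafilter S) := by
  ext A
  rw [mem_uadd_iff]
  simp

end helper

/-- Every additively idempotent ultrafilter on a large integral domain contains the
set of multiples of any nonzero `r`. -/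
lemma idem_mem_dvd {R : Type*} [CommRing R] [IsDomain R] (hR : IsLargeID R)
    {r : R} (hr : r ≠ 0) {s : Ultrafilter R} (hs : uadd s s = s) :
    {x : R | r ∣ x} ∈ s := by
  set I := Ideal.span ({r} : Set R) with hIdef
  have hI : I ≠ ⊥ := by
    simpa [hIdef, Ideal.span_singleton_eq_bot] using hr
  have : Finite (R ⧸ I) := hR I hI
  set π : R → R ⧸ I := ⇑(Ideal.Quotient.mk I) with hπdef
  have hπ : ∀ x y : R, π (x + y) = π x + π y := fun x y => map_add _ x y
  obtain ⟨a, ha⟩ := (s.map π).eq_pure_of_finite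
  have hidem : uadd (s.map π) (s.map π) = s.map π := by
    rw [← map_uadd π hπ, hs]
  rw [ha, uadd_pure] at hidem
  have haa : a + a = a := by
    have h1 : ({a + a} : Set (R ⧸ I)) ∈ (pure (a + a) : Ultrafilter (R ⧸ I)) :=
      Ultrafilter.mem_pure.mpr rfl
    rw [hidem] at h1
    have h2 : a = a + a := by simpa using h1
    exact h2.symm
  have ha0 : a = 0 := by
    have := add_eq_left.mp haa
    exact this
  have hmem : π ⁻¹' {a} ∈ s := by
    have : ({a} : Set (R ⧸ I)) ∈ s.map π := by
      rw [ha]; exact Ultrafilter.mem_pure.mpr rfl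
    exact Ultrafilter.mem_map.1 this
  refine Filter.mem_of_superset hmem ?_
  intro x hx
  have hx0 : π x = 0 := by simpa [ha0] using hx
  have : x ∈ I := by
    exact Ideal.Quotient.eq_zero_iff_mem.mp hx0
  rwa [hIdef, Ideal.mem_span_singleton] at this

/-- In a large integral domain `R`, if `A` is an additive central⋆-set, then so is
`r⁻¹A = {x | r * x ∈ A}` for every nonzero `r`. -/
theorem stmt_13 {R : Type*} [CommRing R] [IsDomain R] (hR : IsLargeID R)
    (A : Set R) (hA : AddCentralStar A) (r : R) (hr : r ≠ 0) :
    AddCentralStar {x : R | r * x ∈ A} := by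
  intro C hC
  obtain ⟨p, hp, hCp⟩ := hC
  set f : R → R := fun x => r * x with hfdef
  have hfh : ∀ x y : R, f (x + y) = f x + f y := fun x y => mul_add r x y
  have hfinj : Function.Injective f := fun x y h => mul_left_cancel₀ hr h
  have hinj : Function.Injective (Ultrafilter.map f (α := R)) := umap_inj hfinj
  -- partial inverse of f
  set g : R → R := Function.invFun f with hgdef
  have hfg : {y : R | f (g y) = y} ⊇ {y : R | r ∣ y} := by
    intro y hy
    obtain ⟨c, hc⟩ := hy
    exact Function.invFun_eq ⟨c, hc.symm⟩
  set q : Ultrafilter R := p.map f with hqdef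
  have hqidem : uadd q q = q := by
    rw [hqdef, ← map_uadd f hfh, hp.1]
  have hqmin : IsMinimalIdempotentAdd q := by
    refine ⟨hqidem, fun s hs hsq hqs => ?_⟩
    have hdvd : {x : R | r ∣ x} ∈ s := idem_mem_dvd hR hr hs
    set s' : Ultrafilter R := s.map g with hs'def
    have hfs' : s'.map f = s := by
      rw [hs'def, Ultrafilter.map_map]
      have : s.map (f ∘ g) = s.map id :=
        umap_congr (Filter.mem_of_superset hdvd hfg)
      rw [this, Ultrafilter.map_id]
    have hs'idem : uadd s' s' = s' := by
      apply hinj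
      rw [map_uadd f hfh, hfs', hs]
    have hs'p : uadd s' p = s' := by
      apply hinj
      rw [map_uadd f hfh, hfs', ← hqdef, hsq]
    have hps' : uadd p s' = s' := by
      apply hinj
      rw [map_uadd f hfh, hfs', ← hqdef, hqs]
    have : s' = p := hp.2 s' hs'idem hs'p hps'
    rw [← hfs', this, ← hqdef]
  have hfC : (f '' C) ∈ q :=
    Ultrafilter.mem_map.2 (Filter.mem_of_superset hCp (Set.subset_preimage_image f C))
  obtain ⟨y, hyA, hyC⟩ := hA (f '' C) ⟨q, hqmin, hfC⟩
  obtain ⟨x, hxC, rfl⟩ := hyC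
  exact ⟨x, hyA, hxC⟩
end

section
/- Let R be an infinite large integral domain. For any finite partition R = C_1 ∪ C_2 ∪ ... ∪ C_k, at least one cell C_i is both additively central in (R, +) and multiplicatively central in (R \ {0}, ·). -/
/-!
In a compact Hausdorff semigroup with continuous right translations, every closed left ideal
contains a minimal idempotent: take a minimal closed left ideal (Zorn) and an idempotent in it
(Ellis–Numakura). Apply this in `β(R \ {0})` to the set of ultrafilters all of whose members are
additively central. It is a left ideal because multiplication by `c ≠ 0` maps `R` additively and
injectively onto the ideal `cR`; that ideal has finite index, so it belongs to every additive
idempotent of `βR`, and hence `c * ·` maps minimal additive idempotents to minimal ones.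
It is nonempty since a nonprincipal minimal additive idempotent of `βR` lives on `R \ {0}`.
A minimal multiplicative idempotent in it contains some cell of the partition, and that cell is
central for both operations.
-/

open Filter Set Function

attribute [local instance] Ultrafilter.mul Ultrafilter.add Ultrafilter.semigroup
  Ultrafilter.addSemigroup

attribute [to_additive existing uadd] umul
attribute [to_additive existing IsMinimalIdempotentAdd] IsMinimalIdempotent

section CompactSemigroup

variable {M : Type*} [Semigroup M] [TopologicalSpace M] [CompactSpace M]

@[to_additive exists_minimal_isClosed_addLeftIdeal_subset]
theorem exists_minimal_isClosed_leftIdeal_subset {N : Set M} (hN : IsClosed N)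
    (hne : N.Nonempty) (hideal : ∀ r, ∀ x ∈ N, r * x ∈ N) :
    ∃ L ⊆ N, Minimal (fun L : Set M => L.Nonempty ∧ IsClosed L ∧ ∀ r, ∀ x ∈ L, r * x ∈ L) L := by
  refine zorn_superset_nonempty _ (fun c hc hchain hcne => ?_) N ⟨hne, hN, hideal⟩
  have : Nonempty c := hcne.coe_sort
  refine ⟨⋂₀ c, ⟨?_, isClosed_sInter fun L hL => (hc hL).2.1, fun r x hx => ?_⟩,
    fun L hL => sInter_subset_of_mem hL⟩
  · have hdir : DirectedOn (· ⊇ ·) c := IsChain.directedOn hchain.symm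
    exact IsCompact.nonempty_sInter_of_directed_nonempty_isCompact_isClosed hdir
      (fun L hL => (hc hL).1) (fun L hL => (hc hL).2.1.isCompact) (fun L hL => (hc hL).2.1)
  · exact mem_sInter.2 fun L hL => (hc hL).2.2 r x (mem_sInter.1 hx L hL)

@[to_additive eq_of_idempotent_of_mem_minimal_addLeftIdeal]
theorem eq_of_idempotent_of_mem_minimal_leftIdeal [T2Space M]
    (hcont : ∀ r : M, Continuous (· * r)) {L : Set M}
    (hL : Minimal (fun L : Set M => L.Nonempty ∧ IsClosed L ∧ ∀ r, ∀ x ∈ L, r * x ∈ L) L)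
    {e f : M} (he : e ∈ L) (hff : f * f = f) (hfe : f * e = f) (hef : e * f = f) : f = e := by
  have hfL : f ∈ L := hfe ▸ hL.prop.2.2 f e he
  have hrange : range (· * f) = L := by
    refine hL.eq_of_subset ⟨⟨f * f, f, rfl⟩, (isCompact_range (hcont f)).isClosed, ?_⟩ ?_
    · rintro r _ ⟨s, rfl⟩
      exact ⟨r * s, mul_assoc r s f⟩
    · rintro _ ⟨r, rfl⟩
      exact hL.prop.2.2 r f hfL
  obtain ⟨r, hr⟩ : e ∈ range (· * f) := hrange ▸ he
  calc f = e * f := hef.symm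
    _ = e := by rw [← hr, mul_assoc, hff]

@[to_additive exists_minimal_add_idempotent_mem]
theorem exists_minimal_idempotent_mem [T2Space M] (hcont : ∀ r : M, Continuous (· * r))
    {N : Set M} (hN : IsClosed N) (hne : N.Nonempty) (hideal : ∀ r, ∀ x ∈ N, r * x ∈ N) :
    ∃ e ∈ N, e * e = e ∧ ∀ f, f * f = f → f * e = f → e * f = f → f = e := by
  obtain ⟨L, hLN, hL⟩ := exists_minimal_isClosed_leftIdeal_subset hN hne hideal
  obtain ⟨hLne, hLcl, hLid⟩ := hL.prop
  obtain ⟨e, heL, hee⟩ := exists_idempotent_in_compact_subsemigroup hcont L hLne hLcl.isCompact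
    fun x _ y hy => hLid x y hy
  exact ⟨e, hLN heL, hee, fun f => eq_of_idempotent_of_mem_minimal_leftIdeal hcont hL heL⟩

end CompactSemigroup

namespace Ultrafilter

variable {α : Type*}

theorem isClosed_setOf_forall_mem (P : Set α → Prop) :
    IsClosed {u : Ultrafilter α | ∀ A ∈ u, P A} := by
  have : {u : Ultrafilter α | ∀ A ∈ u, P A} = ⋂ (A) (_ : ¬P A), {u | A ∈ u}ᶜ := by
    ext u
    simp only [mem_ofPred_eq, mem_iInter, mem_compl_iff]
    exact forall_congr' fun A => not_imp_not.symm
  rw [this]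
  exact isClosed_iInter fun A => isClosed_iInter fun _ =>
    (ultrafilter_isOpen_basic A).isClosed_compl

theorem exists_mem_of_iUnion_eq_univ {ι : Type*} [Finite ι] (u : Ultrafilter α)
    {s : ι → Set α} (hs : ⋃ i, s i = univ) : ∃ i, s i ∈ u := by
  obtain ⟨i, -, hi⟩ := (u.finite_biUnion_mem_iff (s := s) finite_univ).1
    (by rw [biUnion_univ, hs]; exact univ_mem)
  exact ⟨i, hi⟩

theorem map_injective {β : Type*} {f : α → β} (hf : Injective f) : Injective (map f) :=
  fun u v h => coe_injective (Filter.map_injective hf (by rw [← coe_map, ← coe_map, h]))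

theorem map_comap {β : Type*} {f : α → β} (hf : Injective f) (u : Ultrafilter β)
    (hr : range f ∈ u) : (u.comap hf hr).map f = u :=
  coe_injective <| by
    rw [coe_map, coe_comap, Filter.map_comap, inf_eq_left.2 (le_principal_iff.2 hr)]

@[to_additive]
theorem mem_mul [Mul α] {U V : Ultrafilter α} {A : Set α} :
    A ∈ U * V ↔ {x | (x * ·) ⁻¹' A ∈ V} ∈ U := Iff.rfl

@[to_additive]
theorem pure_mul_pure [Mul α] (a b : α) : (pure a : Ultrafilter α) * pure b = pure (a * b) := rfl

@[to_additive]
theorem map_mul_of_mulHomClass {β F : Type*} [Mul α] [Mul β] [FunLike F α β]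
    [MulHomClass F α β] (f : F) (U V : Ultrafilter α) : (U * V).map f = U.map f * V.map f := by
  ext A
  simp only [mem_map, mem_mul, preimage_ofPred_eq, preimage_preimage, map_mul]

@[to_additive]
theorem mul_mem_setOf_forall_mem [Mul α] {P : Set α → Prop} (hmono : Monotone P)
    (htrans : ∀ x A, P A → P ((x * ·) '' A)) (r : Ultrafilter α) {u : Ultrafilter α}
    (hu : ∀ A ∈ u, P A) : ∀ A ∈ r * u, P A := by
  intro A hA
  obtain ⟨x, hx⟩ := Ultrafilter.nonempty_of_mem (mem_mul.1 hA)
  exact hmono (image_subset_iff.2 fun y hy => hy) (htrans x _ (hu _ hx))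

theorem preimage_zero_mem_of_add_idempotent {G Q F : Type*} [Add G] [AddGroup Q] [Finite Q]
    [FunLike F G Q] [AddHomClass F G Q] (f : F) {U : Ultrafilter G} (hU : U + U = U) :
    f ⁻¹' {0} ∈ U := by
  obtain ⟨t, ht⟩ := (U.map f).eq_pure_of_finite
  have htt : t + t = t := by
    apply pure_injective
    rw [← pure_add_pure, ← ht, ← map_add_of_addHomClass, hU]
  rw [← mem_map, ht, add_eq_right.1 htt]
  exact rfl

end Ultrafilter

theorem Ideal.coe_mem_of_add_idempotent {R : Type*} [CommRing R] {I : Ideal R} [Finite (R ⧸ I)]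
    {U : Ultrafilter R} (hU : U + U = U) : (I : Set R) ∈ U := by
  convert Ultrafilter.preimage_zero_mem_of_add_idempotent (Ideal.Quotient.mk I) hU using 1
  ext x
  exact Ideal.Quotient.eq_zero_iff_mem.symm

@[to_additive exists_isMinimalIdempotentAdd_forall_mem]
theorem exists_isMinimalIdempotent_forall_mem {S : Type*} [Semigroup S] {P : Set S → Prop}
    (hmono : Monotone P) (htrans : ∀ x A, P A → P ((x * ·) '' A))
    (hne : ∃ u : Ultrafilter S, ∀ A ∈ u, P A) :
    ∃ p : Ultrafilter S, IsMinimalIdempotent p ∧ ∀ A ∈ p, P A := by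
  obtain ⟨p, hpP, hpp, hmin⟩ := exists_minimal_idempotent_mem Ultrafilter.continuous_mul_left
    (Ultrafilter.isClosed_setOf_forall_mem P) hne
    fun r _ hu => Ultrafilter.mul_mem_setOf_forall_mem hmono htrans r hu
  exact ⟨p, ⟨hpp, hmin⟩, hpP⟩

theorem exists_isMinimalIdempotentAdd_forall_infinite (S : Type*) [AddSemigroup S]
    [IsLeftCancelAdd S] [Infinite S] :
    ∃ p : Ultrafilter S, IsMinimalIdempotentAdd p ∧ ∀ A ∈ p, A.Infinite := by
  refine exists_isMinimalIdempotentAdd_forall_mem (fun A B hAB hA => hA.mono hAB)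
    (fun x A hA => hA.image (add_right_injective x).injOn) ⟨.of cofinite, fun A hA hfin => ?_⟩
  exact Ultrafilter.compl_notMem_iff.2 hA (Ultrafilter.of_le cofinite hfin.compl_mem_cofinite)

theorem uadd_eq_add {S : Type*} [AddSemigroup S] (p q : Ultrafilter S) : uadd p q = p + q := rfl

theorem IsMinimalIdempotentAdd.map {S T F : Type*} [AddSemigroup S] [AddSemigroup T]
    [FunLike F S T] [AddHomClass F S T] {f : F} (hf : Injective f)
    (hrange : ∀ q : Ultrafilter T, q + q = q → range f ∈ q) {p : Ultrafilter S}
    (hp : IsMinimalIdempotentAdd p) : IsMinimalIdempotentAdd (p.map f) := by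
  simp only [IsMinimalIdempotentAdd, uadd_eq_add] at hp ⊢
  obtain ⟨hpp, hmin⟩ := hp
  refine ⟨by rw [← Ultrafilter.map_add_of_addHomClass, hpp], fun q hqq hqp hpq => ?_⟩
  -- `q` lives on `range f`, so it is the image of an ultrafilter `q'` below `p`.
  have hq := Ultrafilter.map_comap hf q (hrange q hqq)
  set q' := q.comap hf (hrange q hqq)
  have hlift : ∀ {a b c : Ultrafilter S}, a.map f + b.map f = c.map f → a + b = c :=
    fun h => Ultrafilter.map_injective hf (by rwa [← Ultrafilter.map_add_of_addHomClass] at h)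
  rw [← hq, hmin q' (hlift (by rwa [hq])) (hlift (by rwa [hq])) (hlift (by rwa [hq]))]

theorem AddCentral.mono {S : Type*} [AddSemigroup S] {A B : Set S} (hA : AddCentral A)
    (hAB : A ⊆ B) : AddCentral B :=
  let ⟨p, hp, hAp⟩ := hA
  ⟨p, hp, mem_of_superset hAp hAB⟩

theorem AddCentral.image {S T F : Type*} [AddSemigroup S] [AddSemigroup T] [FunLike F S T]
    [AddHomClass F S T] {f : F} (hf : Injective f)
    (hrange : ∀ q : Ultrafilter T, q + q = q → range f ∈ q) {A : Set S} (hA : AddCentral A) :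
    AddCentral (f '' A) :=
  let ⟨p, hp, hAp⟩ := hA
  ⟨p.map f, hp.map hf hrange,
    Ultrafilter.mem_map.2 (mem_of_superset hAp (subset_preimage_image f A))⟩

theorem AddCentral.image_mul_left {R : Type*} [CommRing R] [IsDomain R] (hR : IsLargeID R)
    {c : R} (hc : c ≠ 0) {A : Set R} (hA : AddCentral A) : AddCentral ((c * ·) '' A) := by
  refine hA.image (f := AddMonoidHom.mulLeft c) (mul_right_injective₀ hc) fun q hq => ?_
  have : Finite (R ⧸ Ideal.span {c}) := hR _ (by rwa [Ne, Ideal.span_singleton_eq_bot])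
  convert Ideal.coe_mem_of_add_idempotent (I := Ideal.span {c}) hq using 1
  ext x
  simp [Ideal.mem_span_singleton', mul_comm]

/-- In an infinite large integral domain, every finite partition has a cell that is
both additively central in `(R, +)` and multiplicatively central in `(R \ {0}, ·)`. -/
theorem stmt_15 {R : Type*} [CommRing R] [IsDomain R] [Infinite R]
    (hR : IsLargeID R) (k : ℕ) (C : Fin k → Set R) (hcov : (⋃ i, C i) = Set.univ) :
    ∃ i, AddCentral (C i) ∧ MulCentralNZ (C i) := by
  obtain ⟨p₀, hp₀, hp₀inf⟩ := exists_isMinimalIdempotentAdd_forall_infinite R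
  have hnz : range ((↑) : {x : R // x ≠ 0} → R) ∈ p₀ := by
    rw [Subtype.range_coe_subtype, ← compl_singleton_eq]
    exact Ultrafilter.compl_mem_iff_notMem.2 fun h => hp₀inf _ h (finite_singleton 0)
  obtain ⟨p, hp, hpP⟩ := exists_isMinimalIdempotent_forall_mem
    (P := fun A : Set {x : R // x ≠ 0} => AddCentral (((↑) : _ → R) '' A))
    (fun A B hAB hA => hA.mono (image_mono hAB))
    (fun x A hA => (hA.image_mul_left hR x.2).mono (by simp only [image_image]; rfl))
    ⟨p₀.comap Subtype.coe_injective hnz, fun A hA => ⟨p₀, hp₀, (Ultrafilter.mem_comap _ _ _).1 hA⟩⟩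
  obtain ⟨i, hi⟩ := (p.map (↑)).exists_mem_of_iUnion_eq_univ hcov
  exact ⟨i, (hpP _ hi).mono (image_subset_iff.2 fun _ h => h), p, hp, hi⟩
end

section
/- Let R be an integral domain that is not large, i.e., there exists nonzero α ∈ R with the additive subgroup αR of infinite index in R. Then in the partition R = αR ∪ (R \ αR), the cell αR is not additively central in (R, +) and the cell R \ αR is not multiplicatively central in (R \ {0}, ·). -/
/-!
A minimal idempotent `p` of a compact right topological semigroup lies in `M (q p)` for every
`q`: an idempotent `f` of the compact subsemigroup `M (q p)` gives the idempotent `p f ≤ p`,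
hence `p = p f`. In `βS` with `q` principal at `a`, this says that a central set meets
`S a S`, which the complement of `αR` does not (take `a = α`). With `q` an ultrafilter
containing no coset of a subgroup `H` of infinite index, it shows that `H ∈ p` would force
some coset of `H` into `q`.
-/

open Filter Set

@[to_additive]
theorem exists_mul_mul_eq_of_minimal_idempotent {M : Type*} [Semigroup M] [TopologicalSpace M]
    [T2Space M] [CompactSpace M] (continuous_mul_left : ∀ r : M, Continuous (· * r)) {p : M}
    (hp : p * p = p) (hmin : ∀ f : M, f * f = f → f * p = f → p * f = f → f = p) (q : M) :
    ∃ r, r * (q * p) = p := by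
  obtain ⟨f, ⟨s, rfl⟩, hff⟩ := exists_idempotent_in_compact_subsemigroup continuous_mul_left
    (range (· * (q * p))) ⟨_, q, rfl⟩
    (isCompact_range (continuous_mul_left _))
    (by rintro _ ⟨x, rfl⟩ _ ⟨y, rfl⟩; exact ⟨x * (q * p) * y, by simp only [mul_assoc]⟩)
  have hfp : s * (q * p) * p = s * (q * p) := by simp only [mul_assoc, hp]
  refine ⟨p * s, ?_⟩
  rw [mul_assoc]
  refine hmin _ ?_ ?_ ?_
  · calc p * (s * (q * p)) * (p * (s * (q * p)))
        = p * ((s * (q * p) * p) * (s * (q * p))) := by simp only [mul_assoc]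
      _ = p * (s * (q * p)) := by rw [hfp, hff]
  · rw [mul_assoc, hfp]
  · rw [← mul_assoc, hp]

section Ultrafilters

attribute [local instance] Ultrafilter.semigroup Ultrafilter.addSemigroup

theorem IsMinimalIdempotent.exists_umul_umul_eq {S : Type*} [Semigroup S] {p : Ultrafilter S}
    (hp : IsMinimalIdempotent p) (q : Ultrafilter S) : ∃ r, umul r (umul q p) = p :=
  exists_mul_mul_eq_of_minimal_idempotent Ultrafilter.continuous_mul_left hp.1 hp.2 q

theorem IsMinimalIdempotentAdd.exists_uadd_uadd_eq {S : Type*} [AddSemigroup S]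
    {p : Ultrafilter S} (hp : IsMinimalIdempotentAdd p) (q : Ultrafilter S) :
    ∃ r, uadd r (uadd q p) = p :=
  exists_add_add_eq_of_minimal_idempotent Ultrafilter.continuous_add_left hp.1 hp.2 q

end Ultrafilters

theorem Central.exists_mul_mul_mem {S : Type*} [Semigroup S] {A : Set S} (hA : Central A)
    (a : S) : ∃ x z, x * (a * z) ∈ A := by
  obtain ⟨p, hp, hAp⟩ := hA
  obtain ⟨r, hr⟩ := hp.exists_umul_umul_eq (pure a)
  rw [← hr] at hAp
  obtain ⟨x, hx⟩ := r.nonempty_of_mem hAp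
  obtain ⟨z, hz⟩ := p.nonempty_of_mem (s := {z | x * (a * z) ∈ A}) hx
  exact ⟨x, z, hz⟩

theorem AddSubgroup.exists_ultrafilter_forall_coset_notMem {G : Type*} [AddGroup G]
    (H : AddSubgroup G) [Infinite (G ⧸ H)] :
    ∃ q : Ultrafilter G, ∀ x, {y | x + y ∈ H} ∉ q := by
  have : (Filter.comap ((↑) : G → G ⧸ H) (hyperfilter (G ⧸ H))).NeBot :=
    (hyperfilter (G ⧸ H)).neBot.comap_of_surj QuotientAddGroup.mk_surjective
  obtain ⟨q, hq⟩ := exists_ultrafilter_le (Filter.comap ((↑) : G → G ⧸ H) (hyperfilter (G ⧸ H)))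
  refine ⟨q, fun x hx => ?_⟩
  have hoff : ((↑) : G → G ⧸ H) ⁻¹' {((-x : G) : G ⧸ H)}ᶜ ∈ q :=
    hq (Filter.preimage_mem_comap (compl_mem_hyperfilter_of_finite (finite_singleton _)))
  obtain ⟨y, hy, hyx⟩ := q.nonempty_of_mem (inter_mem hx hoff)
  exact hyx (QuotientAddGroup.eq.mpr (by rwa [neg_neg])).symm

theorem AddCentral.finite_quotient {G : Type*} [AddGroup G] {H : AddSubgroup G}
    (hH : AddCentral (H : Set G)) : Finite (G ⧸ H) := by
  by_contra hfin
  have := not_finite_iff_infinite.mp hfin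
  obtain ⟨q, hq⟩ := H.exists_ultrafilter_forall_coset_notMem
  obtain ⟨p, hp, hHp⟩ := hH
  obtain ⟨r, hr⟩ := hp.exists_uadd_uadd_eq q
  obtain ⟨x, hx⟩ := r.nonempty_of_mem (hr ▸ hHp)
  refine hq x (mem_of_superset hx fun y hy => ?_)
  obtain ⟨z, hxyz, hz⟩ := p.nonempty_of_mem (s := {z | x + (y + z) ∈ H} ∩ H) (inter_mem hy hHp)
  show x + y ∈ H
  simpa only [← add_assoc, add_sub_cancel_right] using H.sub_mem hxyz hz

/-- If `R` is an integral domain that is not large, witnessed by a nonzero `α` with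
`αR` of infinite additive index, then in the partition `R = αR ∪ (R \ αR)` the cell
`αR` is not additively central and `R \ αR` is not multiplicatively central. -/
theorem stmt_16 {R : Type*} [CommRing R] [IsDomain R] (α : R) (hα : α ≠ 0)
    (hinf : ¬ Finite (R ⧸ Ideal.span ({α} : Set R))) :
    ¬ AddCentral ((Ideal.span ({α} : Set R) : Ideal R) : Set R) ∧
    ¬ MulCentralNZ (((Ideal.span ({α} : Set R) : Ideal R) : Set R)ᶜ) := by
  set I := Ideal.span ({α} : Set R)
  refine ⟨fun h => hinf (AddCentral.finite_quotient (H := I.toAddSubgroup) h), fun h => ?_⟩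
  obtain ⟨x, z, hxz⟩ := Central.exists_mul_mul_mem h ⟨α, hα⟩
  exact hxz (I.mul_mem_left _ (I.mul_mem_right _ (Ideal.mem_span_singleton_self α)))
end
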